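/- arXiv:1807.06306 — 6 statements merged into one kernel-verified Lean document; each statement's English description precedes it below -/
import Mathlib

section
/- For N > 0 and D_m > 0, the function f(x) = (D_m + x)·e^(2N/(D_m+x)) − D_m·e^(N/D_m) − x·e^(N/x) is monotonically non-decreasing on (0, D_m). -/
/-!
Write `f(x) = φ_{2N}(D_m + x) - D_m e^{N/D_m} - φ_N(x)` with `φ_c(y) = y e^{c/y}`. Since
`φ_c'(y) = g(c/y)` for `g(t) = (1 - t) e^t`, we get `f'(x) = g(2N/(D_m + x)) - g(N/x)`.
Now `g'(t) = -t e^t ≤ 0` on `[0, ∞)` and `0 < 2N/(D_m + x) ≤ N/x` because `x ≤ D_m`,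
so `f' ≥ 0`.
-/

open Real Set

lemma antitoneOn_one_sub_mul_exp : AntitoneOn (fun t : ℝ => (1 - t) * exp t) (Ici 0) := by
  have hderiv (t : ℝ) : HasDerivAt (fun t : ℝ => (1 - t) * exp t) (-t * exp t) t :=
    (((hasDerivAt_id' t).const_sub 1).fun_mul (hasDerivAt_exp t)).congr_deriv (by ring)
  refine antitoneOn_of_hasDerivWithinAt_nonpos (convex_Ici 0)
    (fun t _ => (hderiv t).continuousAt.continuousWithinAt)
    (fun t _ => (hderiv t).hasDerivWithinAt) fun t ht => ?_
  rw [interior_Ici] at ht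
  have : 0 < t * exp t := mul_pos ht (exp_pos t)
  linarith

lemma hasDerivAt_mul_exp_div (c : ℝ) {y : ℝ} (hy : y ≠ 0) :
    HasDerivAt (fun y : ℝ => y * exp (c / y)) ((1 - c / y) * exp (c / y)) y := by
  have hquot := (hasDerivAt_const y c).fun_div (hasDerivAt_id' y) hy
  exact ((hasDerivAt_id' y).fun_mul hquot.exp).congr_deriv (by field_simp; ring)

theorem stmt_2_general (N Dm : ℝ) (hN : 0 < N) :
    MonotoneOn (fun x : ℝ =>
      (Dm + x) * Real.exp (2 * N / (Dm + x)) - Dm * Real.exp (N / Dm) - x * Real.exp (N / x))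
      (Set.Ioo 0 Dm) := by
  have hderiv : ∀ x ∈ Ioo 0 Dm, HasDerivAt (fun x : ℝ =>
      (Dm + x) * exp (2 * N / (Dm + x)) - Dm * exp (N / Dm) - x * exp (N / x))
      ((1 - 2 * N / (Dm + x)) * exp (2 * N / (Dm + x)) - (1 - N / x) * exp (N / x)) x := by
    rintro x ⟨hx, hxD⟩
    have hsum : 0 < Dm + x := by linarith
    have hshift := (hasDerivAt_mul_exp_div (2 * N) hsum.ne').comp_const_add Dm x
    exact (hshift.sub_const _).fun_sub (hasDerivAt_mul_exp_div N hx.ne')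
  refine monotoneOn_of_hasDerivWithinAt_nonneg (convex_Ioo 0 Dm)
    (fun x hx => (hderiv x hx).continuousAt.continuousWithinAt)
    (fun x hx => (hderiv x (interior_subset hx)).hasDerivWithinAt) fun x hx => ?_
  rw [interior_Ioo] at hx
  obtain ⟨hx, hxD⟩ := hx
  have hsum : 0 < Dm + x := by linarith
  have hpos : 0 ≤ 2 * N / (Dm + x) := div_nonneg (by positivity) hsum.le
  have hle : 2 * N / (Dm + x) ≤ N / x := by
    rw [div_le_div_iff₀ hsum hx]
    nlinarith
  have hg := antitoneOn_one_sub_mul_exp hpos (hpos.trans hle) hle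
  simp only at hg
  linarith

theorem stmt_2 (N Dm : ℝ) (hN : 0 < N) (hD : 0 < Dm) :
    MonotoneOn (fun x : ℝ =>
      (Dm + x) * Real.exp (2 * N / (Dm + x)) - Dm * Real.exp (N / Dm) - x * Real.exp (N / x))
      (Set.Ioo 0 Dm) :=
  stmt_2_general N Dm hN
end

section
/- For N > 0, D_m > 0, and 0 < T_n < D_m, it holds that (D_m + T_n)·e^(2N/(D_m+T_n)) ≤ D_m·e^(N/D_m) + T_n·e^(N/T_n); that is, hybrid NOMA requires no more energy than OMA. -/
/-! The mean of `N / Dm` and `N / Tn` with weights `Dm` and `Tn` is `2 * N / (Dm + Tn)`, so the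
inequality is Jensen's inequality for the convex function `exp`. -/

theorem ConvexOn.add_mul_map_div_le {s : Set ℝ} {f : ℝ → ℝ} (hf : ConvexOn ℝ s f)
    {x y a b : ℝ} (hx : x ∈ s) (hy : y ∈ s) (ha : 0 < a) (hb : 0 < b) :
    (a + b) * f ((a * x + b * y) / (a + b)) ≤ a * f x + b * f y := by
  have hab : 0 < a + b := by positivity
  have hjensen := hf.2 hx hy (div_nonneg ha.le hab.le) (div_nonneg hb.le hab.le)
    (by rw [← add_div, div_self hab.ne'])
  simp only [smul_eq_mul] at hjensen
  calc (a + b) * f ((a * x + b * y) / (a + b))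
      = (a + b) * f (a / (a + b) * x + b / (a + b) * y) := by congr 2; field_simp
    _ ≤ (a + b) * (a / (a + b) * f x + b / (a + b) * f y) := by gcongr
    _ = a * f x + b * f y := by field_simp

theorem stmt_3_general (N Dm Tn : ℝ) (hD : 0 < Dm) (hT : 0 < Tn) :
    (Dm + Tn) * Real.exp (2 * N / (Dm + Tn)) ≤
      Dm * Real.exp (N / Dm) + Tn * Real.exp (N / Tn) := by
  have hsum : Dm * (N / Dm) + Tn * (N / Tn) = 2 * N := by field_simp; ring
  simpa only [hsum] using
    convexOn_exp.add_mul_map_div_le (Set.mem_univ (N / Dm)) (Set.mem_univ (N / Tn)) hD hT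

theorem stmt_3 (N Dm Tn : ℝ) (hN : 0 < N) (hD : 0 < Dm) (hT : 0 < Tn) (hTD : Tn < Dm) :
    (Dm + Tn) * Real.exp (2 * N / (Dm + Tn)) ≤
      Dm * Real.exp (N / Dm) + Tn * Real.exp (N / Tn) :=
  stmt_3_general N Dm Tn hD hT
end

section
/- For N > 0, D_m > 0, and T_n ≥ 0, the hybrid NOMA energy D_m·e^(N/D_m)·(e^(N(D_m−T_n)/(D_m(D_m+T_n))) − 1) + T_n·(e^(N(D_m−T_n)/(D_m(D_m+T_n)) + N/D_m) − 1) is at most the pure NOMA energy D_m·e^(N/D_m)·(e^(N/D_m) − 1). -/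
theorem stmt_4 (N Dm Tn : ℝ) (hN : 0 < N) (hD : 0 < Dm) (hT : 0 ≤ Tn) :
    Dm * Real.exp (N / Dm) * (Real.exp (N * (Dm - Tn) / (Dm * (Dm + Tn))) - 1) +
      Tn * (Real.exp (N * (Dm - Tn) / (Dm * (Dm + Tn)) + N / Dm) - 1) ≤
    Dm * Real.exp (N / Dm) * (Real.exp (N / Dm) - 1) := by
  have hDT : 0 < Dm + Tn := by linarith
  set a := N / Dm with ha
  set u := N * (Dm - Tn) / (Dm * (Dm + Tn)) with hu
  set s := 2 * N / (Dm + Tn) with hs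
  have hsum : u + a = s := by
    rw [hu, ha, hs]; field_simp; ring
  have heq : Tn * s = Dm * (a - u) := by
    rw [hu, ha, hs]; field_simp; ring
  set A := Real.exp a with hA
  set U := Real.exp u with hU
  have hApos : 0 < A := Real.exp_pos a
  have hUpos : 0 < U := Real.exp_pos u
  have hUA : Real.exp (u + a) = U * A := Real.exp_add u a
  have hAU : Real.exp (a - u) * U = A := by
    rw [hU, hA, ← Real.exp_add]; ring_nf
  have h1 : a - u + 1 ≤ Real.exp (a - u) := Real.add_one_le_exp _
  have h1' : (a - u) * U ≤ A - U := by nlinarith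
  have hs0 : 0 ≤ s := by positivity
  have h2 : (1 - s) * Real.exp s ≤ 1 := by
    have h := mul_le_mul_of_nonneg_right (Real.add_one_le_exp (-s))
      (le_of_lt (Real.exp_pos s))
    rw [← Real.exp_add, neg_add_cancel, Real.exp_zero] at h
    nlinarith
  have h2' : U * A - 1 ≤ s * (U * A) := by
    rw [← hsum, Real.exp_add, ← hU, ← hA, hsum] at h2; nlinarith
  rw [hUA]
  have heq2 : Tn * s * (U * A) = Dm * (a - u) * (U * A) := by rw [heq]
  have hau : 0 ≤ a - u := by
    have : a - u = 2 * N * Tn / (Dm * (Dm + Tn)) := by rw [ha, hu]; field_simp; ring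
    rw [this]; positivity
  clear_value a u s A U
  have t1 : Tn * (U * A - 1) ≤ Tn * (s * (U * A)) := mul_le_mul_of_nonneg_left h2' hT
  have t2 : Dm * A * ((a - u) * U) ≤ Dm * A * (A - U) :=
    mul_le_mul_of_nonneg_left h1' (by positivity)
  nlinarith [t1, t2, heq2]
end

section
/- For N > 0 and D_m > 0, the normalized hybrid NOMA energy g(T_n) = D_m·e^(N/D_m)·(e^(y1(T_n)) − 1) + T_n·(e^(y2(T_n)) − 1), where y1(T_n) = N(D_m − T_n)/(D_m(D_m + T_n)) and y2(T_n) = y1(T_n) + N/D_m, is monotonically non-increasing in T_n on [0, ∞). -/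
/-! Since `y₂ = y₁ + N / Dm = 2 N / (Dm + Tn)`, the energy is `s (exp (2 N / s) - 1)` plus a
constant, where `s = Dm + Tn`. That term is the slope of the convex function `t ↦ exp (2 N t)`
between `0` and `1 / s`, so it decreases as `s` grows. -/

open Real Set

lemma convexOn_exp_const_mul (c : ℝ) : ConvexOn ℝ univ fun t : ℝ => exp (c * t) :=
  convexOn_exp.comp_linearMap (LinearMap.mul ℝ ℝ c)

lemma antitoneOn_mul_exp_div_sub_one (c : ℝ) :
    AntitoneOn (fun s : ℝ => s * (exp (c / s) - 1)) (Ioi 0) := by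
  intro s (hs : 0 < s) s' (hs' : 0 < s') hss'
  have hslope (r : ℝ) : r * (exp (c / r) - 1) = (exp (c * r⁻¹) - exp (c * 0)) / (r⁻¹ - 0) := by
    rw [mul_zero, exp_zero, sub_zero, div_inv_eq_mul, div_eq_mul_inv, mul_comm]
  dsimp only
  rw [hslope s, hslope s']
  exact (convexOn_exp_const_mul c).secant_mono (mem_univ _) (mem_univ _) (mem_univ _)
    (by positivity) (by positivity) (inv_anti₀ hs hss')

lemma hybrid_energy_eq (N Dm Tn : ℝ) (hD : Dm ≠ 0) (hDT : Dm + Tn ≠ 0) :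
    Dm * exp (N / Dm) * (exp (N * (Dm - Tn) / (Dm * (Dm + Tn))) - 1) +
        Tn * (exp (N * (Dm - Tn) / (Dm * (Dm + Tn)) + N / Dm) - 1) =
      (Dm + Tn) * (exp (2 * N / (Dm + Tn)) - 1) + Dm * (1 - exp (N / Dm)) := by
  have hy : N * (Dm - Tn) / (Dm * (Dm + Tn)) + N / Dm = 2 * N / (Dm + Tn) := by
    field_simp
    ring
  rw [hy, ← hy, exp_add]
  ring

theorem stmt_5_general (N Dm : ℝ) (hD : 0 < Dm) :
    AntitoneOn (fun Tn : ℝ =>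
      Dm * Real.exp (N / Dm) * (Real.exp (N * (Dm - Tn) / (Dm * (Dm + Tn))) - 1) +
        Tn * (Real.exp (N * (Dm - Tn) / (Dm * (Dm + Tn)) + N / Dm) - 1))
      (Set.Ici 0) := by
  intro a (ha : 0 ≤ a) b (hb : 0 ≤ b) hab
  have hDa : 0 < Dm + a := by positivity
  have hDb : 0 < Dm + b := by positivity
  dsimp only
  rw [hybrid_energy_eq N Dm a hD.ne' hDa.ne', hybrid_energy_eq N Dm b hD.ne' hDb.ne']
  gcongr ?_ + _
  exact antitoneOn_mul_exp_div_sub_one (2 * N) hDa hDb (by linarith)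

theorem stmt_5 (N Dm : ℝ) (hN : 0 < N) (hD : 0 < Dm) :
    AntitoneOn (fun Tn : ℝ =>
      Dm * Real.exp (N / Dm) * (Real.exp (N * (Dm - Tn) / (Dm * (Dm + Tn))) - 1) +
        Tn * (Real.exp (N * (Dm - Tn) / (Dm * (Dm + Tn)) + N / Dm) - 1))
      (Set.Ici 0) :=
  stmt_5_general N Dm hD
end

section
/- For N > 0, D_m > 0, T_n > 0, the pair (y1*, y2*) with y1* = N(D_m−T_n)/(D_m(D_m+T_n)) and y2* = y1* + N/D_m minimizes the function F(y1, y2) = D_m·e^(N/D_m)·e^(y1) + T_n·e^(y2) over all (y1, y2) with y1 ≥ 0, y2 ≥ 0, D_m·y1 + T_n·y2 ≥ N, provided 0 < T_n < D_m. -/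
theorem stmt_8 (N Dm Tn : ℝ) (hN : 0 < N) (hD : 0 < Dm) (hT : 0 < Tn) (hTD : Tn < Dm) :
    ∀ y1 y2 : ℝ, 0 ≤ y1 → 0 ≤ y2 → N ≤ Dm * y1 + Tn * y2 →
      Dm * Real.exp (N / Dm) * Real.exp (N * (Dm - Tn) / (Dm * (Dm + Tn))) +
        Tn * Real.exp (N * (Dm - Tn) / (Dm * (Dm + Tn)) + N / Dm) ≤
      Dm * Real.exp (N / Dm) * Real.exp y1 + Tn * Real.exp y2 := by
  intro y1 y2 hy1 hy2 hcon
  have hDT : (0:ℝ) < Dm + Tn := by linarith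
  have key : ∀ u v : ℝ,
      (Dm + Tn) * Real.exp ((Dm * u + Tn * v) / (Dm + Tn)) ≤
        Dm * Real.exp u + Tn * Real.exp v := by
    intro u v
    have h := convexOn_exp.2 (Set.mem_univ u) (Set.mem_univ v)
      (le_of_lt (div_pos hD hDT)) (le_of_lt (div_pos hT hDT)) (by field_simp)
    simp only [smul_eq_mul] at h
    have e1 : Dm / (Dm + Tn) * u + Tn / (Dm + Tn) * v = (Dm * u + Tn * v) / (Dm + Tn) := by
      ring
    rw [e1] at h
    have := mul_le_mul_of_nonneg_left h (le_of_lt hDT)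
    calc (Dm + Tn) * Real.exp ((Dm * u + Tn * v) / (Dm + Tn))
        ≤ (Dm + Tn) * (Dm / (Dm + Tn) * Real.exp u + Tn / (Dm + Tn) * Real.exp v) := this
      _ = Dm * Real.exp u + Tn * Real.exp v := by field_simp
  have hne : Dm ≠ 0 := ne_of_gt hD
  have hne2 : Dm + Tn ≠ 0 := ne_of_gt hDT
  have hstar : N / Dm + N * (Dm - Tn) / (Dm * (Dm + Tn)) = 2 * N / (Dm + Tn) := by
    field_simp
    ring
  have hLHS : Dm * Real.exp (N / Dm) * Real.exp (N * (Dm - Tn) / (Dm * (Dm + Tn))) +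
        Tn * Real.exp (N * (Dm - Tn) / (Dm * (Dm + Tn)) + N / Dm)
      = (Dm + Tn) * Real.exp (2 * N / (Dm + Tn)) := by
    rw [mul_assoc, ← Real.exp_add, hstar, add_comm (N * (Dm - Tn) / (Dm * (Dm + Tn)))]
    rw [hstar]
    ring
  rw [hLHS]
  have h2N : 2 * N ≤ Dm * (N / Dm + y1) + Tn * y2 := by
    have : Dm * (N / Dm + y1) = N + Dm * y1 := by field_simp
    rw [this]; linarith
  calc (Dm + Tn) * Real.exp (2 * N / (Dm + Tn))
      ≤ (Dm + Tn) * Real.exp ((Dm * (N / Dm + y1) + Tn * y2) / (Dm + Tn)) := by gcongr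
    _ ≤ Dm * Real.exp (N / Dm + y1) + Tn * Real.exp y2 := key _ _
    _ = Dm * Real.exp (N / Dm) * Real.exp y1 + Tn * Real.exp y2 := by
        rw [Real.exp_add]; ring
end

section
/- For N > 0 and 0 < T_n < D_m, the hybrid NOMA energy D_m·e^(N/D_m)·(e^(N(D_m−T_n)/(D_m(D_m+T_n))) − 1) + T_n·(e^(2N/(D_m+T_n)) − 1) is strictly greater than D_m·(e^(N/D_m) − 1). -/
theorem stmt_9 (N Dm Tn : ℝ) (hN : 0 < N) (hD : 0 < Dm) (hT : 0 < Tn) (hTD : Tn < Dm) :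
    Dm * (Real.exp (N / Dm) - 1) <
      Dm * Real.exp (N / Dm) * (Real.exp (N * (Dm - Tn) / (Dm * (Dm + Tn))) - 1) +
        Tn * (Real.exp (2 * N / (Dm + Tn)) - 1) := by
  have hS : 0 < Dm + Tn := by linarith
  have ha : 0 < N / Dm := div_pos hN hD
  have hb : 0 < N * (Dm - Tn) / (Dm * (Dm + Tn)) :=
    div_pos (mul_pos hN (by linarith)) (mul_pos hD hS)
  have hsum : 2 * N / (Dm + Tn) = N / Dm + N * (Dm - Tn) / (Dm * (Dm + Tn)) := by
    field_simp
    ring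
  rw [hsum, Real.exp_add]
  set a := N / Dm with hadef
  set b := N * (Dm - Tn) / (Dm * (Dm + Tn)) with hbdef
  have haD : a * Dm = N := div_mul_cancel₀ _ (ne_of_gt hD)
  have hbD : b * (Dm * (Dm + Tn)) = N * (Dm - Tn) :=
    div_mul_cancel₀ _ (ne_of_gt (mul_pos hD hS))
  have hE : 0 < Real.exp a := Real.exp_pos a
  have hF : b + 1 < Real.exp b := Real.add_one_lt_exp (ne_of_gt hb)
  have hkey : Real.exp a - 1 < a * Real.exp a := by
    have h := Real.add_one_lt_exp (neg_ne_zero.mpr (ne_of_gt ha))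
    rw [Real.exp_neg] at h
    have h2 : (1 - a) * Real.exp a < 1 := by
      have := mul_lt_mul_of_pos_right h hE
      rwa [inv_mul_cancel₀ (ne_of_gt hE), neg_add_eq_sub] at this
    nlinarith
  have hb2 : b * (Dm + Tn) * Real.exp a = a * (Dm - Tn) * Real.exp a := by
    have : b * (Dm + Tn) = a * (Dm - Tn) := by
      rw [hadef, hbdef]; field_simp
    rw [this]
  nlinarith [mul_lt_mul_of_pos_left hF (mul_pos hS hE),
    mul_lt_mul_of_pos_left hkey (sub_pos.mpr hTD)]
end
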